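/- arXiv:2111.07862 — 5 statements merged into one kernel-verified Lean document; each statement's English description precedes it below -/
import Mathlib

section
/- For all integers n ≥ 1, k ≥ 1 and every integer c, the element x^n · y^k is nonzero in the ring R(n,k,c) = ℤ[X,Y]/(X^{n+1}, Y^{k+1} + c·X·Y^k). -/
open MvPolynomial

noncomputable section

/-- The ideal `(X^{n+1}, Y^{k+1} + c·X·Y^k)` in `ℤ[X,Y]`. -/
def relIdeal (n k : ℕ) (c : ℤ) : Ideal (MvPolynomial (Fin 2) ℤ) :=
  Ideal.span {(X 0 : MvPolynomial (Fin 2) ℤ) ^ (n + 1),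
    (X 1 : MvPolynomial (Fin 2) ℤ) ^ (k + 1) + C c * X 0 * (X 1 : MvPolynomial (Fin 2) ℤ) ^ k}

/-- The ring `R(n,k,c) = ℤ[X,Y]/(X^{n+1}, Y^{k+1} + c·X·Y^k)`. -/
abbrev R (n k : ℕ) (c : ℤ) := MvPolynomial (Fin 2) ℤ ⧸ relIdeal n k c

/-- The image `x` of `X` in `R(n,k,c)`. -/
def x (n k : ℕ) (c : ℤ) : R n k c := Ideal.Quotient.mk (relIdeal n k c) (X 0)

/-- The image `y` of `Y` in `R(n,k,c)`. -/
def y (n k : ℕ) (c : ℤ) : R n k c := Ideal.Quotient.mk (relIdeal n k c) (X 1)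

/-! The relation `Y^{k+1} + c·X·Y^k` is monic in `Y`, so over `A = ℤ[a]/(a^{n+1})` the ring
`A[T]/(T^{k+1} + c·a·T^k)` is free with basis `1, T, …, T^k`. Sending `x ↦ a`, `y ↦ T` defines a
ring map out of `R(n,k,c)`, and the image `a^n·T^k` of `x^n·y^k` is the nonzero coefficient
`a^n` times a basis element. -/

section relPoly

variable {A : Type*} [CommRing A]

def relPoly (a : A) (c : ℤ) (k : ℕ) : Polynomial A :=
  Polynomial.X ^ (k + 1) + Polynomial.C (c * a) * Polynomial.X ^ k

lemma Polynomial.degree_C_mul_X_pow_lt_succ (r : A) (k : ℕ) :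
    (Polynomial.C r * Polynomial.X ^ k).degree < ↑(k + 1) :=
  (Polynomial.degree_C_mul_X_pow_le k r).trans_lt (by exact_mod_cast k.lt_succ_self)

variable (a : A) (c : ℤ) (k : ℕ)

lemma relPoly_monic : (relPoly a c k).Monic :=
  Polynomial.monic_X_pow_add (Polynomial.degree_C_mul_X_pow_lt_succ _ k)

lemma natDegree_relPoly [Nontrivial A] : (relPoly a c k).natDegree = k + 1 := by
  rw [relPoly, Polynomial.natDegree_add_eq_left_of_degree_lt, Polynomial.natDegree_X_pow]
  rw [Polynomial.degree_X_pow]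
  exact Polynomial.degree_C_mul_X_pow_lt_succ _ k

lemma eval₂_relPoly {S : Type*} [CommRing S] (g : A →+* S) (t : S) :
    (relPoly a c k).eval₂ g t = t ^ (k + 1) + c * g a * t ^ k := by
  rw [relPoly, Polynomial.eval₂_add, Polynomial.eval₂_mul, Polynomial.eval₂_X_pow,
    Polynomial.eval₂_X_pow, Polynomial.eval₂_C, map_mul, map_intCast]

lemma relPoly_root :
    AdjoinRoot.root (relPoly a c k) ^ (k + 1)
      + c * AdjoinRoot.of (relPoly a c k) a * AdjoinRoot.root (relPoly a c k) ^ k = 0 := by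
  rw [← eval₂_relPoly, AdjoinRoot.eval₂_root]

end relPoly

lemma AdjoinRoot.of_mul_root_pow_ne_zero {A : Type*} [CommRing A] {f : Polynomial A}
    (hf : f.Monic) {r : A} (hr : r ≠ 0) {k : ℕ} (hk : k < f.natDegree) :
    AdjoinRoot.of f r * AdjoinRoot.root f ^ k ≠ 0 := by
  rw [← AdjoinRoot.mk_C, ← AdjoinRoot.mk_X, ← map_pow, ← map_mul]
  refine AdjoinRoot.mk_ne_zero_of_natDegree_lt hf ?_ ?_
  · rwa [Ne, Polynomial.C_mul_X_pow_eq_monomial, Polynomial.monomial_eq_zero_iff]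
  · rwa [Polynomial.natDegree_C_mul_X_pow _ _ hr]

lemma Polynomial.X_pow_notMem_span_X_pow_succ {A : Type*} [CommRing A] [IsDomain A] (n : ℕ) :
    (Polynomial.X : Polynomial A) ^ n ∉ Ideal.span {Polynomial.X ^ (n + 1)} := by
  rw [Ideal.mem_span_singleton, pow_dvd_pow_iff Polynomial.X_ne_zero Polynomial.not_isUnit_X]
  omega

namespace R

variable {n k : ℕ} {c : ℤ} {S : Type*} [CommRing S]

def lift (a b : S) (ha : a ^ (n + 1) = 0) (hb : b ^ (k + 1) + c * a * b ^ k = 0) :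
    R n k c →+* S :=
  Ideal.Quotient.lift _ (aeval ![a, b]).toRingHom fun p hp => by
    refine (Ideal.span_le (I := RingHom.ker _)).2 ?_ hp
    rintro q (rfl | rfl) <;> simp [ha, hb]

section

variable {a b : S} {ha : a ^ (n + 1) = 0} {hb : b ^ (k + 1) + c * a * b ^ k = 0}

@[simp]
lemma lift_x : lift a b ha hb (x n k c) = a := by
  simp [lift, x]

@[simp]
lemma lift_y : lift a b ha hb (y n k c) = b := by
  simp [lift, y]

end

lemma x_pow_mul_y_pow_ne_zero_of_lift (a b : S) (ha : a ^ (n + 1) = 0)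
    (hb : b ^ (k + 1) + c * a * b ^ k = 0) (hab : a ^ n * b ^ k ≠ 0) :
    x n k c ^ n * y n k c ^ k ≠ 0 := fun h => hab <| by
  simpa using congrArg (lift a b ha hb) h

end R

theorem stmt1_general (n k : ℕ) (c : ℤ) :
    x n k c ^ n * y n k c ^ k ≠ 0 := by
  set a := Ideal.Quotient.mk (Ideal.span {(Polynomial.X : Polynomial ℤ) ^ (n + 1)}) Polynomial.X
  have hnil : a ^ (n + 1) = 0 := by
    rw [← map_pow, Ideal.Quotient.eq_zero_iff_mem]
    exact Ideal.subset_span rfl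
  have hna : a ^ n ≠ 0 := by
    rw [← map_pow, Ne, Ideal.Quotient.eq_zero_iff_mem]
    exact Polynomial.X_pow_notMem_span_X_pow_succ n
  have : Nontrivial _ := nontrivial_of_ne _ _ hna
  set f := relPoly a c k
  refine R.x_pow_mul_y_pow_ne_zero_of_lift (AdjoinRoot.of f a) (AdjoinRoot.root f)
    (by rw [← map_pow, hnil, map_zero]) (relPoly_root a c k) ?_
  rw [← map_pow]
  exact AdjoinRoot.of_mul_root_pow_ne_zero (relPoly_monic a c k) hna
    (by rw [natDegree_relPoly]; omega)

/-- For all `n ≥ 1`, `k ≥ 1` and every integer `c`, the element `x^n·y^k` is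
nonzero in `R(n,k,c)`. -/
theorem stmt1 (n k : ℕ) (hn : 1 ≤ n) (hk : 1 ≤ k) (c : ℤ) :
    x n k c ^ n * y n k c ^ k ≠ 0 :=
  stmt1_general n k c

end
end

section
/- For all integers n ≥ 1, k ≥ 1, every integer c, and every natural number a with 0 ≤ a ≤ n, one has the identity y^{k+a} · x^{n−a} = (−c)^a · x^n · y^k in the ring R(n,k,c). -/
open MvPolynomial

noncomputable section

theorem pow_add_eq_of_pow_succ_eq {M : Type*} [Monoid M] {u y : M} {k : ℕ}
    (h : y ^ (k + 1) = u * y ^ k) (a : ℕ) : y ^ (k + a) = u ^ a * y ^ k := by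
  induction a with
  | zero => simp
  | succ a ih =>
    rw [← add_assoc, add_right_comm, pow_add, h, mul_assoc, ← pow_add, ih,
      ← mul_assoc, ← pow_succ']

theorem y_pow_succ (n k : ℕ) (c : ℤ) :
    y n k c ^ (k + 1) = (-c * x n k c) * y n k c ^ k := by
  have hrel : Ideal.Quotient.mk (relIdeal n k c)
      ((X 1) ^ (k + 1) + C c * X 0 * X 1 ^ k) = 0 :=
    Ideal.Quotient.eq_zero_iff_mem.mpr (Ideal.subset_span (by simp))
  rw [map_add, map_mul, map_mul, map_pow, map_pow, ← x, ← y,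
    ← RingHom.comp_apply, eq_intCast] at hrel
  linear_combination hrel

theorem stmt2_general (n k : ℕ) (c : ℤ) (a : ℕ) (ha : a ≤ n) :
    y n k c ^ (k + a) * x n k c ^ (n - a) = (-c) ^ a • (x n k c ^ n * y n k c ^ k) := by
  rw [pow_add_eq_of_pow_succ_eq (y_pow_succ n k c), zsmul_eq_mul, ← pow_mul_pow_sub _ ha]
  push_cast
  ring

/-- For all `n ≥ 1`, `k ≥ 1`, every integer `c` and every natural number `a ≤ n`,
one has `y^{k+a}·x^{n-a} = (-c)^a · x^n·y^k` in `R(n,k,c)`. -/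
theorem stmt2 (n k : ℕ) (hn : 1 ≤ n) (hk : 1 ≤ k) (c : ℤ) (a : ℕ) (ha : a ≤ n) :
    y n k c ^ (k + a) * x n k c ^ (n - a) = (-c) ^ a • (x n k c ^ n * y n k c ^ k) :=
  stmt2_general n k c a ha
end
end

section
/- Let n ≥ 1 and k ≥ 1 be odd integers, set m = (n+k)/2, and let a, b be natural numbers with a + b ≤ m. Then there exists a polynomial P ∈ ℤ[t] involving only odd powers of t and of degree at most n, such that for every integer c the identity y^{2a} · x^{2b} · (y + c·x)^{2(m−a−b)} = P(c) · x^n · y^k holds in the ring R(n,k,c). -/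
/-!
In `R(n,k,c)` every monomial of total degree `n + k` is an integer multiple of the
top class: `x^{n+1} = 0` kills those with `p > n`, and `y^{k+1} = -c·x·y^k` trades each surplus
power of `y` for a factor `-c·x`, so `x^p y^q = (-c)^{q-k} x^n y^k` whenever `q ≥ k`.
Expanding `y^{2a} x^{2b} (y + c x)^{2r}` binomially, every surviving term therefore carries
exactly `c^{n-2b}`, so `P = A·t^{n-2b}` for an integer `A`; the exponent `n - 2b` is odd because `n`
is, and `A = 0` when `2b > n`.
-/

open MvPolynomial

noncomputable section

section Reduction

variable {S : Type*} [CommRing S] {x y c : S} {n k : ℕ}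

theorem pow_mul_pow_add_eq_of_pow_succ_eq (hy : y ^ (k + 1) = -(c * x * y ^ k)) (p j : ℕ) :
    x ^ p * y ^ (k + j) = (-c) ^ j * (x ^ (p + j) * y ^ k) := by
  induction j generalizing p with
  | zero => simp
  | succ j ih =>
    calc x ^ p * y ^ (k + (j + 1)) = -c * (x ^ (p + 1) * y ^ (k + j)) := by
          rw [show k + (j + 1) = k + 1 + j by omega, pow_add, hy]; ring
      _ = (-c) ^ (j + 1) * (x ^ (p + (j + 1)) * y ^ k) := by
          rw [ih, show p + 1 + j = p + (j + 1) by omega]; ring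

theorem pow_mul_pow_eq_of_add_eq (hx : x ^ (n + 1) = 0) (hy : y ^ (k + 1) = -(c * x * y ^ k))
    {p q : ℕ} (hpq : p + q = n + k) :
    x ^ p * y ^ q = (if k ≤ q then (-c) ^ (q - k) else 0) * (x ^ n * y ^ k) := by
  by_cases hq : k ≤ q
  · obtain ⟨j, rfl⟩ := Nat.exists_eq_add_of_le hq
    rw [if_pos hq, pow_mul_pow_add_eq_of_pow_succ_eq hy, show p + j = n by omega,
      Nat.add_sub_cancel_left]
  · obtain ⟨s, rfl⟩ : ∃ s, p = n + 1 + s := ⟨p - (n + 1), by omega⟩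
    rw [if_neg hq, pow_add, hx]; ring

/-- The integer `A` with `y^a x^b (y + c x)^r = A c^{n-b} x^n y^k` when `a + b + r = n + k`. -/
def topCoeff (k a r : ℕ) : ℤ :=
  ∑ i ∈ Finset.range (r + 1), if k ≤ a + i then (-1) ^ (a + i - k) * (r.choose i : ℤ) else 0

theorem topCoeff_eq_zero_of_lt {k a r : ℕ} (h : a + r < k) : topCoeff k a r = 0 :=
  Finset.sum_eq_zero fun i hi => if_neg (by rw [Finset.mem_range] at hi; omega)

theorem pow_mul_pow_mul_add_pow_eq (hx : x ^ (n + 1) = 0) (hy : y ^ (k + 1) = -(c * x * y ^ k))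
    {a b r : ℕ} (h : a + b + r = n + k) :
    y ^ a * x ^ b * (y + c * x) ^ r = (topCoeff k a r : S) * c ^ (n - b) * (x ^ n * y ^ k) := by
  rw [topCoeff, add_pow, Finset.mul_sum, Int.cast_sum, Finset.sum_mul, Finset.sum_mul]
  refine Finset.sum_congr rfl fun i hi => ?_
  have hir : i ≤ r := Nat.lt_succ_iff.mp (Finset.mem_range.mp hi)
  calc y ^ a * x ^ b * (y ^ i * (c * x) ^ (r - i) * (r.choose i : S))
      = (r.choose i : S) * c ^ (r - i) * (x ^ (b + (r - i)) * y ^ (a + i)) := by ring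
    _ = _ := by
      rw [pow_mul_pow_eq_of_add_eq hx hy (by omega)]
      split_ifs with hk
      · have hc : c ^ (r - i) * c ^ (a + i - k) = c ^ (n - b) := by
          rw [← pow_add]; congr 1; omega
        rw [neg_pow, ← hc]; push_cast; ring
      · simp

end Reduction

theorem x_pow_succ_eq_zero (n k : ℕ) (c : ℤ) : x n k c ^ (n + 1) = 0 := by
  rw [x, ← map_pow, Ideal.Quotient.eq_zero_iff_mem]
  exact Ideal.subset_span (by simp)

theorem y_pow_succ_eq (n k : ℕ) (c : ℤ) :
    y n k c ^ (k + 1) = -((c : R n k c) * x n k c * y n k c ^ k) := by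
  have h : Ideal.Quotient.mk (relIdeal n k c) (X 1 ^ (k + 1) + C c * X 0 * X 1 ^ k) = 0 :=
    Ideal.Quotient.eq_zero_iff_mem.2 (Ideal.subset_span (by simp))
  simp only [map_add, map_mul, map_pow] at h
  exact eq_neg_of_add_eq_zero_left h

theorem stmt3_general (n k m : ℕ) (hno : Odd n)
    (hm : n + k = 2 * m) (a b : ℕ) (hab : a + b ≤ m) :
    ∃ P : Polynomial ℤ, (∀ i : ℕ, P.coeff i ≠ 0 → Odd i) ∧ P.natDegree ≤ n ∧
      ∀ c : ℤ,
        y n k c ^ (2 * a) * x n k c ^ (2 * b) * (y n k c + c • x n k c) ^ (2 * (m - a - b))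
          = P.eval c • (x n k c ^ n * y n k c ^ k) := by
  set A := topCoeff k (2 * a) (2 * (m - a - b))
  refine ⟨Polynomial.monomial (n - 2 * b) A, fun i hi => ?_,
    (Polynomial.natDegree_monomial_le A).trans (Nat.sub_le n _), fun c => ?_⟩
  · rw [Polynomial.coeff_monomial] at hi
    split_ifs at hi with hi'
    · have hb : 2 * b ≤ n := by
        by_contra hb
        exact hi (topCoeff_eq_zero_of_lt (by omega))
      obtain ⟨w, rfl⟩ := hno
      exact ⟨w - b, by omega⟩
    · exact absurd rfl hi
  · rw [zsmul_eq_mul, zsmul_eq_mul, pow_mul_pow_mul_add_pow_eq (x_pow_succ_eq_zero n k c)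
      (y_pow_succ_eq n k c) (by omega), Polynomial.eval_monomial]
    push_cast; ring

/-- Let `n, k ≥ 1` be odd, `n + k = 2m`, and `a + b ≤ m`. Then there is a polynomial
`P ∈ ℤ[t]` involving only odd powers of `t` and of degree at most `n` such that for
every integer `c`, `y^{2a}·x^{2b}·(y + c·x)^{2(m-a-b)} = P(c)·x^n·y^k` in `R(n,k,c)`. -/
theorem stmt3 (n k m : ℕ) (hn : 1 ≤ n) (hk : 1 ≤ k) (hno : Odd n) (hko : Odd k)
    (hm : n + k = 2 * m) (a b : ℕ) (hab : a + b ≤ m) :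
    ∃ P : Polynomial ℤ, (∀ i : ℕ, P.coeff i ≠ 0 → Odd i) ∧ P.natDegree ≤ n ∧
      ∀ c : ℤ,
        y n k c ^ (2 * a) * x n k c ^ (2 * b) * (y n k c + c • x n k c) ^ (2 * (m - a - b))
          = P.eval c • (x n k c ^ n * y n k c ^ k) :=
  stmt3_general n k m hno hm a b hab
end
end

section
/- Let n ≥ 3 and k ≥ 3 be odd integers and c any integer. Then in the ring R(n,k,c) one has the identity (n+1)·x²·(k·y^{n+k−2} + (n+1)·x^{n+k−2} + (y+c·x)^{n+k−2}) + k·y²·((k−1)·y^{n+k−2} + (n+1)·x^{n+k−2} + (y+c·x)^{n+k−2}) + (y+c·x)²·(k·y^{n+k−2} + (n+1)·x^{n+k−2}) = ( k·(C(n+k−3, n) − (k−1))·c^n + (n+1)·(C(n+k−3, n−2) − k)·c^{n−2} ) · x^n · y^k, where C denotes the binomial coefficient. -/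
/-!
Write `z = y + c·x`. The relations say `x^{n+1} = 0` and `y^k·z = 0`, so
`y^{k+j} = (-c·x)^j·y^k` and every monomial of degree `n + k` is an integer multiple of
`x^n·y^k`. In particular `x^{n+k-2} = 0`, `z²·y^{n+k-2} = 0`, and
`x^e·y^{k+n-e} = (-c)^{n-e}·x^n·y^k`, which is `-c^{n-e}·x^n·y^k` for `e ∈ {0, 2}`
because `n` is odd. Expanding `x^e·y^{2-e}·z^{n+k-2}` binomially, only the terms of
`x`-degree at most `n` survive, and after the reduction their coefficients form the
alternating partial sum `∑_{i ≤ n-e} (-1)^i C(n+k-2, i) = (-1)^{n-e} C(n+k-3, n-e)`.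
-/

open MvPolynomial

noncomputable section

section TopDegree

open Finset

variable {A : Type*} [CommRing A] {a b c : A} {n k : ℕ}

theorem pow_add_eq_neg_mul_pow_mul (hb : b ^ k * (b + c * a) = 0) (j : ℕ) :
    b ^ (k + j) = (-(c * a)) ^ j * b ^ k := by
  induction j with
  | zero => simp
  | succ j ih => linear_combination b * ih + (-(c * a)) ^ j * hb

theorem pow_mul_pow_add_sub (hb : b ^ k * (b + c * a) = 0) {e : ℕ} (he : e ≤ n) :
    a ^ e * b ^ (k + (n - e)) = (-c) ^ (n - e) * (a ^ n * b ^ k) := by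
  rw [pow_add_eq_neg_mul_pow_mul hb, neg_mul_eq_neg_mul, mul_pow, ← Nat.add_sub_cancel' he,
    pow_add, Nat.add_sub_cancel_left]
  ring

theorem pow_mul_add_pow_eq_zero (hb : b ^ k * (b + c * a) = 0) {j m : ℕ} (hj : k ≤ j)
    (hm : m ≠ 0) : b ^ j * (b + c * a) ^ m = 0 := by
  obtain ⟨j, rfl⟩ := Nat.exists_eq_add_of_le hj
  obtain ⟨m, rfl⟩ := Nat.exists_eq_add_of_le' (Nat.one_le_iff_ne_zero.2 hm)
  linear_combination b ^ j * (b + c * a) ^ m * hb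

theorem pow_mul_pow_mul_add_pow_succ (ha : a ^ (n + 1) = 0) (hb : b ^ k * (b + c * a) = 0)
    {e f M : ℕ} (he : e ≤ n) (hf : f ≤ k) (hM : e + f + (M + 1) = n + k) :
    a ^ e * b ^ f * (b + c * a) ^ (M + 1)
      = (M.choose (n - e) : A) * c ^ (n - e) * (a ^ n * b ^ k) := by
  set t := n - e
  have high_vanish : ∀ i ∈ range (M + 1 + 1), i ∉ range (t + 1) →
      a ^ e * b ^ f * ((c * a) ^ i * b ^ (M + 1 - i) * ((M + 1).choose i : A)) = 0 := by
    intro i _ hi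
    have : a ^ e * a ^ i = 0 := by
      rw [← pow_add]
      exact pow_eq_zero_of_le (by simp at hi; omega) ha
    linear_combination (c ^ i * b ^ f * b ^ (M + 1 - i) * ((M + 1).choose i : A)) * this
  have low_reduce : ∀ i ∈ range (t + 1),
      a ^ e * b ^ f * ((c * a) ^ i * b ^ (M + 1 - i) * ((M + 1).choose i : A))
        = (((-1) ^ i * (M + 1).choose i : ℤ) : A) * ((-c) ^ t * (a ^ n * b ^ k)) := by
    intro i hi
    have hi : i ≤ t := Nat.lt_succ_iff.1 (mem_range.1 hi)
    have hy : b ^ f * b ^ (M + 1 - i) = (-(c * a)) ^ (t - i) * b ^ k := by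
      rw [← pow_add, ← pow_add_eq_neg_mul_pow_mul hb]
      congr 1
      omega
    have hx : a ^ e * a ^ i * a ^ (t - i) = a ^ n := by
      rw [← pow_add, ← pow_add]
      congr 1
      omega
    have hc : (-1) ^ i * (-c) ^ t = c ^ i * (-c) ^ (t - i) := by
      rw [← Nat.add_sub_cancel' hi, pow_add, Nat.add_sub_cancel_left, ← mul_assoc, ← mul_pow]
      simp
    push_cast
    linear_combination (a ^ e * c ^ i * a ^ i * ((M + 1).choose i : A)) * hy
      + ((-c) ^ (t - i) * c ^ i * b ^ k * ((M + 1).choose i : A)) * hx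
      - (((M + 1).choose i : A) * a ^ n * b ^ k) * hc
  have hsign : (-1 : A) ^ t * (-c) ^ t = c ^ t := by rw [← mul_pow]; ring
  rw [add_comm b, add_pow, mul_sum,
    ← sum_subset (range_subset_range.2 (by omega : t + 1 ≤ M + 1 + 1)) high_vanish,
    sum_congr rfl low_reduce, ← sum_mul, ← Int.cast_sum,
    Int.alternating_sum_range_choose_eq_choose]
  push_cast
  linear_combination (M.choose t : A) * (a ^ n * b ^ k) * hsign

end TopDegree

theorem y_pow_mul_add_eq_zero (n k : ℕ) (c : ℤ) :
    y n k c ^ k * (y n k c + (c : R n k c) * x n k c) = 0 := by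
  have h : Ideal.Quotient.mk (relIdeal n k c)
      ((X 1 : MvPolynomial (Fin 2) ℤ) ^ (k + 1) + C c * X 0 * X 1 ^ k) = 0 := by
    rw [Ideal.Quotient.eq_zero_iff_mem]
    exact Ideal.subset_span (Set.mem_insert_of_mem _ rfl)
  rw [eq_intCast C c] at h
  simp only [map_add, map_mul, map_pow, map_intCast] at h
  rw [x, y]
  linear_combination h

theorem stmt9_general (n k : ℕ) (hn : 3 ≤ n) (hk : 3 ≤ k) (hno : Odd n) (c : ℤ) :
    ((n : ℤ) + 1) • (x n k c ^ 2 *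
        ((k : ℤ) • y n k c ^ (n + k - 2) + ((n : ℤ) + 1) • x n k c ^ (n + k - 2)
          + (y n k c + c • x n k c) ^ (n + k - 2)))
      + (k : ℤ) • (y n k c ^ 2 *
        (((k : ℤ) - 1) • y n k c ^ (n + k - 2) + ((n : ℤ) + 1) • x n k c ^ (n + k - 2)
          + (y n k c + c • x n k c) ^ (n + k - 2)))
      + (y n k c + c • x n k c) ^ 2 *
        ((k : ℤ) • y n k c ^ (n + k - 2) + ((n : ℤ) + 1) • x n k c ^ (n + k - 2))
      = ((k : ℤ) * (((n + k - 3).choose n : ℤ) - ((k : ℤ) - 1)) * c ^ n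
          + ((n : ℤ) + 1) * (((n + k - 3).choose (n - 2) : ℤ) - (k : ℤ)) * c ^ (n - 2))
        • (x n k c ^ n * y n k c ^ k) := by
  have hx := x_pow_succ_eq_zero n k c
  have hy := y_pow_mul_add_eq_zero n k c
  have hdeg : n + k - 2 = n + k - 3 + 1 := by omega
  have x_top : x n k c ^ (n + k - 2) = 0 := pow_eq_zero_of_le (by omega) hx
  have z_top := pow_mul_add_pow_eq_zero hy (j := n + k - 2) (m := 2) (by omega) two_ne_zero
  have y_top : y n k c ^ 2 * y n k c ^ (n + k - 2)
      = -(c : R n k c) ^ n * (x n k c ^ n * y n k c ^ k) := by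
    rw [← pow_add, show 2 + (n + k - 2) = k + n by omega, pow_add_eq_neg_mul_pow_mul hy,
      Odd.neg_pow hno ((c : R n k c) * x n k c), mul_pow]
    ring
  have xy_top : x n k c ^ 2 * y n k c ^ (n + k - 2)
      = -(c : R n k c) ^ (n - 2) * (x n k c ^ n * y n k c ^ k) := by
    rw [show n + k - 2 = k + (n - 2) by omega, pow_mul_pow_add_sub hy (by omega),
      Odd.neg_pow (Nat.Odd.sub_even (by omega) hno even_two) (c : R n k c)]
  have x_mix := pow_mul_pow_mul_add_pow_succ hx hy (e := 2) (f := 0) (M := n + k - 3)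
    (by omega) (by omega) (by omega)
  have y_mix := pow_mul_pow_mul_add_pow_succ hx hy (e := 0) (f := 2) (M := n + k - 3)
    (by omega) (by omega) (by omega)
  rw [← hdeg] at x_mix y_mix
  simp only [pow_zero, mul_one, one_mul, Nat.sub_zero] at x_mix y_mix
  simp only [zsmul_eq_mul]
  push_cast
  linear_combination ((n : R n k c) + 1) * x_mix + (k : R n k c) * y_mix
    + ((n : R n k c) + 1) * (k : R n k c) * xy_top + (k : R n k c) * ((k : R n k c) - 1) * y_top
    + (k : R n k c) * z_top
    + (((n : R n k c) + 1) * (((n : R n k c) + 1) * x n k c ^ 2 + (k : R n k c) * y n k c ^ 2)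
        + ((n : R n k c) + 1) * (y n k c + (c : R n k c) * x n k c) ^ 2) * x_top

/-- Let `n, k ≥ 3` be odd and `c` any integer. Then in `R(n,k,c)` the q-number
identity of Proposition 3.4 holds:
`(n+1)·x²·(k·y^{n+k-2} + (n+1)·x^{n+k-2} + (y+cx)^{n+k-2})
 + k·y²·((k-1)·y^{n+k-2} + (n+1)·x^{n+k-2} + (y+cx)^{n+k-2})
 + (y+cx)²·(k·y^{n+k-2} + (n+1)·x^{n+k-2})
 = (k·(C(n+k-3,n) - (k-1))·c^n + (n+1)·(C(n+k-3,n-2) - k)·c^{n-2})·x^n·y^k`. -/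
theorem stmt9 (n k : ℕ) (hn : 3 ≤ n) (hk : 3 ≤ k) (hno : Odd n) (hko : Odd k) (c : ℤ) :
    ((n : ℤ) + 1) • (x n k c ^ 2 *
        ((k : ℤ) • y n k c ^ (n + k - 2) + ((n : ℤ) + 1) • x n k c ^ (n + k - 2)
          + (y n k c + c • x n k c) ^ (n + k - 2)))
      + (k : ℤ) • (y n k c ^ 2 *
        (((k : ℤ) - 1) • y n k c ^ (n + k - 2) + ((n : ℤ) + 1) • x n k c ^ (n + k - 2)
          + (y n k c + c • x n k c) ^ (n + k - 2)))
      + (y n k c + c • x n k c) ^ 2 *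
        ((k : ℤ) • y n k c ^ (n + k - 2) + ((n : ℤ) + 1) • x n k c ^ (n + k - 2))
      = ((k : ℤ) * (((n + k - 3).choose n : ℤ) - ((k : ℤ) - 1)) * c ^ n
          + ((n : ℤ) + 1) * (((n + k - 3).choose (n - 2) : ℤ) - (k : ℤ)) * c ^ (n - 2))
        • (x n k c ^ n * y n k c ^ k) :=
  stmt9_general n k hn hk hno c
end
end

section
/- Let k ≥ 3 be an odd integer and c any integer. Then in the ring R(3,k,c) one has the identity 4·x²·(k·y^{k+1} + 4·x^{k+1} + (y+c·x)^{k+1}) + k·y²·((k−1)·y^{k+1} + 4·x^{k+1} + (y+c·x)^{k+1}) + (y+c·x)²·(k·y^{k+1} + 4·x^{k+1}) = k·(C(k, 3) − (k−1))·c³ · x³ · y^k; in particular the coefficient of the linear power c vanishes, so the q-number of X_3^k(c) is an integer multiple of c³. -/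
open MvPolynomial

noncomputable section

/-!
In `R(n,k,c)` the second relation says `(y + c x) y^k = 0`, hence `y^(k+j) = (-c x)^j y^k`, while
`x^4 = 0` cuts the binomial expansion of `(y + c x)^(k+1)` after its `x^3` term. Every term of the
left side therefore reduces to an integer multiple of `x^3 y^k`. The terms linear in `c` cancel,
since `x^2 (y + c x)^(k+1) = k c x^3 y^k` while `k x^2 y^(k+1) = -k c x^3 y^k`, and the cubic ones
come from `y^2 (y + c x)^(k+1) = C(k,3) c^3 x^3 y^k`, an instance of
`C(k+1,3) - C(k+1,2) + k = C(k,3)`, and from `y^(k+3) = -c^3 x^3 y^k`.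
-/

section
variable {A : Type*}

theorem add_pow_add_three_of_pow_four_eq_zero [CommSemiring A] {a : A} (ha : a ^ 4 = 0)
    (b : A) (m : ℕ) :
    (b + a) ^ (m + 3) = b ^ (m + 3) + (m + 3 : ℕ) * a * b ^ (m + 2)
      + (m + 3).choose 2 * a ^ 2 * b ^ (m + 1) + (m + 3).choose 3 * a ^ 3 * b ^ m := by
  have hvanish : ∀ j ∈ Finset.range (m + 3 + 1), j ∉ Finset.range 4 →
      a ^ j * b ^ (m + 3 - j) * (m + 3).choose j = 0 := by
    intro j _ hj
    rw [pow_eq_zero_of_le (by simpa using hj) ha, zero_mul, zero_mul]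
  rw [add_comm, add_pow, ← Finset.sum_subset (Finset.range_subset_range.2 (by omega)) hvanish]
  simp only [Finset.sum_range_succ, Finset.sum_range_zero, Nat.choose_zero_right,
    Nat.choose_one_right]
  simp only [show m + 3 - 1 = m + 2 by omega, show m + 3 - 2 = m + 1 by omega,
    Nat.add_sub_cancel, Nat.sub_zero]
  ring

theorem pow_add_eq_neg_pow_mul_of_add_mul_pow_eq_zero [CommRing A] {a y : A} {k : ℕ}
    (h : (y + a) * y ^ k = 0) (j : ℕ) : y ^ (k + j) = (-a) ^ j * y ^ k := by
  induction j with
  | zero => simp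
  | succ j ih => linear_combination y * ih + (-a) ^ j * h

section
variable [CommRing A] {x y c : A} {k : ℕ}

theorem sq_mul_add_pow_succ_eq_choose_mul {a : A} (ha : a ^ 4 = 0)
    (hy : (y + a) * y ^ k = 0) (hk : 3 ≤ k) :
    y ^ 2 * (y + a) ^ (k + 1) = k.choose 3 * a ^ 3 * y ^ k := by
  obtain ⟨m, rfl⟩ : ∃ m, k = m + 3 := ⟨k - 3, by omega⟩
  have hpow := pow_add_eq_neg_pow_mul_of_add_mul_pow_eq_zero hy
  have hchoose : ((m + 4).choose 3 : A) - (m + 4).choose 2 + (m + 3 : ℕ) = (m + 3).choose 3 := by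
    have h3 := Nat.choose_succ_succ' (m + 3) 2
    have h2 := Nat.choose_succ_succ' (m + 3) 1
    simp only [Nat.choose_one_right] at h2
    rw [h3, h2]
    push_cast
    ring
  rw [add_pow_add_three_of_pow_four_eq_zero ha y (m + 1)]
  push_cast at hchoose ⊢
  linear_combination hpow 3 + ((m : A) + 4) * a * hpow 2 + (m + 4).choose 2 * a ^ 2 * hpow 1
    + a ^ 3 * y ^ (m + 3) * hchoose

theorem sq_mul_add_mul_pow_succ (hx : x ^ 4 = 0)
    (hy : (y + c * x) * y ^ k = 0) (hk : 3 ≤ k) :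
    x ^ 2 * (y + c * x) ^ (k + 1) = k * c * x ^ 3 * y ^ k := by
  obtain ⟨m, rfl⟩ : ∃ m, k = m + 3 := ⟨k - 3, by omega⟩
  have hcx : (c * x) ^ 4 = 0 := by rw [mul_pow, hx, mul_zero]
  rw [add_pow_add_three_of_pow_four_eq_zero hcx y (m + 1)]
  push_cast
  linear_combination x ^ 2 * pow_add_eq_neg_pow_mul_of_add_mul_pow_eq_zero hy 1
    + ((m + 4).choose 2 * c ^ 2 * y ^ (m + 2) + (m + 4).choose 3 * c ^ 3 * x * y ^ (m + 1)) * hx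

theorem qNumber_expansion_eq (hx : x ^ 4 = 0) (hy : (y + c * x) * y ^ k = 0) (hk : 3 ≤ k) :
    4 * (x ^ 2 * (k * y ^ (k + 1) + 4 * x ^ (k + 1) + (y + c * x) ^ (k + 1)))
      + k * (y ^ 2 * ((k - 1) * y ^ (k + 1) + 4 * x ^ (k + 1) + (y + c * x) ^ (k + 1)))
      + (y + c * x) ^ 2 * (k * y ^ (k + 1) + 4 * x ^ (k + 1))
      = k * (k.choose 3 - (k - 1)) * c ^ 3 * (x ^ 3 * y ^ k) := by
  have hxk : x ^ (k + 1) = 0 := pow_eq_zero_of_le (by omega) hx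
  have hpow := pow_add_eq_neg_pow_mul_of_add_mul_pow_eq_zero hy
  have hcx : (c * x) ^ 4 = 0 := by rw [mul_pow, hx, mul_zero]
  linear_combination 4 * sq_mul_add_mul_pow_succ hx hy hk
    + k * sq_mul_add_pow_succ_eq_choose_mul hcx hy hk
    + 4 * k * x ^ 2 * hpow 1 + k * (k - 1) * hpow 3
    + (k * (y + c * x) * y) * hy
    + (16 * x ^ 2 + 4 * k * y ^ 2 + 4 * (y + c * x) ^ 2) * hxk

end

end

theorem y_add_mul_x_mul_y_pow_eq_zero (n k : ℕ) (c : ℤ) :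
    (y n k c + c * x n k c) * y n k c ^ k = 0 := by
  have h : Ideal.Quotient.mk (relIdeal n k c) (X 1 ^ (k + 1) + C c * X 0 * X 1 ^ k) = 0 :=
    Ideal.Quotient.eq_zero_iff_mem.2 (Ideal.subset_span (by simp))
  rw [map_add, map_mul, map_mul, map_pow, map_pow, ← RingHom.comp_apply, eq_intCast] at h
  rw [x, y]
  linear_combination h

theorem stmt10_general (k : ℕ) (hk : 3 ≤ k) (c : ℤ) :
    ((4 : ℤ) • (x 3 k c ^ 2 *
        ((k : ℤ) • y 3 k c ^ (k + 1) + (4 : ℤ) • x 3 k c ^ (k + 1)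
          + (y 3 k c + c • x 3 k c) ^ (k + 1)))
      + (k : ℤ) • (y 3 k c ^ 2 *
        (((k : ℤ) - 1) • y 3 k c ^ (k + 1) + (4 : ℤ) • x 3 k c ^ (k + 1)
          + (y 3 k c + c • x 3 k c) ^ (k + 1)))
      + (y 3 k c + c • x 3 k c) ^ 2 *
        ((k : ℤ) • y 3 k c ^ (k + 1) + (4 : ℤ) • x 3 k c ^ (k + 1))
      = ((k : ℤ) * ((k.choose 3 : ℤ) - ((k : ℤ) - 1)) * c ^ 3)
          • (x 3 k c ^ 3 * y 3 k c ^ k))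
    ∧ ∃ q : ℤ,
        (4 : ℤ) • (x 3 k c ^ 2 *
            ((k : ℤ) • y 3 k c ^ (k + 1) + (4 : ℤ) • x 3 k c ^ (k + 1)
              + (y 3 k c + c • x 3 k c) ^ (k + 1)))
          + (k : ℤ) • (y 3 k c ^ 2 *
            (((k : ℤ) - 1) • y 3 k c ^ (k + 1) + (4 : ℤ) • x 3 k c ^ (k + 1)
              + (y 3 k c + c • x 3 k c) ^ (k + 1)))
          + (y 3 k c + c • x 3 k c) ^ 2 *
            ((k : ℤ) • y 3 k c ^ (k + 1) + (4 : ℤ) • x 3 k c ^ (k + 1))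
          = (q * c ^ 3) • (x 3 k c ^ 3 * y 3 k c ^ k) := by
  have h := qNumber_expansion_eq (x_pow_succ_eq_zero 3 k c)
    (y_add_mul_x_mul_y_pow_eq_zero 3 k c) hk
  simp only [zsmul_eq_mul]
  push_cast
  exact ⟨h, k * (k.choose 3 - (k - 1)), by push_cast; exact h⟩

/-- Let `k ≥ 3` be odd and `c` any integer. Then in `R(3,k,c)`:
`4·x²·(k·y^{k+1} + 4·x^{k+1} + (y+cx)^{k+1})
 + k·y²·((k-1)·y^{k+1} + 4·x^{k+1} + (y+cx)^{k+1})
 + (y+cx)²·(k·y^{k+1} + 4·x^{k+1}) = k·(C(k,3) - (k-1))·c³·x³·y^k`;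
in particular the `c`-linear coefficient vanishes, so the q-number of `X_3^k(c)` is
an integer multiple of `c³`. -/
theorem stmt10 (k : ℕ) (hk : 3 ≤ k) (hko : Odd k) (c : ℤ) :
    ((4 : ℤ) • (x 3 k c ^ 2 *
        ((k : ℤ) • y 3 k c ^ (k + 1) + (4 : ℤ) • x 3 k c ^ (k + 1)
          + (y 3 k c + c • x 3 k c) ^ (k + 1)))
      + (k : ℤ) • (y 3 k c ^ 2 *
        (((k : ℤ) - 1) • y 3 k c ^ (k + 1) + (4 : ℤ) • x 3 k c ^ (k + 1)
          + (y 3 k c + c • x 3 k c) ^ (k + 1)))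
      + (y 3 k c + c • x 3 k c) ^ 2 *
        ((k : ℤ) • y 3 k c ^ (k + 1) + (4 : ℤ) • x 3 k c ^ (k + 1))
      = ((k : ℤ) * ((k.choose 3 : ℤ) - ((k : ℤ) - 1)) * c ^ 3)
          • (x 3 k c ^ 3 * y 3 k c ^ k))
    ∧ ∃ q : ℤ,
        (4 : ℤ) • (x 3 k c ^ 2 *
            ((k : ℤ) • y 3 k c ^ (k + 1) + (4 : ℤ) • x 3 k c ^ (k + 1)
              + (y 3 k c + c • x 3 k c) ^ (k + 1)))
          + (k : ℤ) • (y 3 k c ^ 2 *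
            (((k : ℤ) - 1) • y 3 k c ^ (k + 1) + (4 : ℤ) • x 3 k c ^ (k + 1)
              + (y 3 k c + c • x 3 k c) ^ (k + 1)))
          + (y 3 k c + c • x 3 k c) ^ 2 *
            ((k : ℤ) • y 3 k c ^ (k + 1) + (4 : ℤ) • x 3 k c ^ (k + 1))
          = (q * c ^ 3) • (x 3 k c ^ 3 * y 3 k c ^ k) :=
  stmt10_general k hk c
end
end
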